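/- arXiv:1812.05967 — 6 statements merged into one kernel-verified Lean document; each statement's English description precedes it below -/
import Mathlib

section
/- Discrete Gaussian Poincaré inequality: given interface values (M*_{j+1/2})_{j∈J*} satisfying M*_{L+1/2} = M*_{-L+1/2} = 0, M_j := (M*_{j-1/2} - M*_{j+1/2})/(v_j Δv_j) > 0, and Σ_j M_j Δv_j = 1 with the symmetry M*_{j+1/2} = M*_{-j+1/2}, then for every f = (f_j)_{j∈J} one has Σ_j |f_j - ρ M_j|² γ_j Δv_j ≤ Σ_{j∈J*} |(f_{j+1}/M_{j+1} - f_j/M_j)/Δv_{j+1/2}|² M*_{j+1/2} Δv_{j+1/2}, where ρ = Σ_j f_j Δv_j and γ_j = 1/M_j. -/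
/-!
With `μ_j = M_j Δv_j` and `g = f / M`, the left side is the variance of `g` under the
probability weights `μ`, that is `∑_{j<k} μ_j μ_k (g_k - g_j)²`. For `j < k`, Cauchy–Schwarz
along the path `j, j+1, …, k` gives
`(g_k - g_j)² ≤ (v_k - v_j) ∑_{j ≤ i < k} (g_{i+1} - g_i)² / Δv_{i+1/2}`.
After exchanging the sums, interface `i` carries the weight `∑_{j ≤ i < k} μ_j μ_k (v_k - v_j)`,
which the discrete Stein identity `μ_j v_j = M*_{j-1/2} - M*_{j+1/2}` telescopes to exactly
`M*_{i+1/2}`, as in the Gaussian computation `∫∫_{x<z<y} (y - x) dγ(x) dγ(y) = φ(z)`.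
-/

open Finset

theorem sum_sum_mul_mul_sub_sq {ι R : Type*} [CommRing R] (s : Finset ι) (μ g : ι → R) :
    ∑ j ∈ s, ∑ k ∈ s, μ j * μ k * (g k - g j) ^ 2 =
      2 * ((∑ j ∈ s, μ j) * ∑ j ∈ s, μ j * g j ^ 2 - (∑ j ∈ s, μ j * g j) ^ 2) := by
  have h : ∀ j k, μ j * μ k * (g k - g j) ^ 2 =
      μ j * (μ k * g k ^ 2) - 2 * (μ j * g j) * (μ k * g k) + μ j * g j ^ 2 * μ k := by
    intro j k; ring
  simp only [h, sum_add_distrib, sum_sub_distrib, ← mul_sum, ← sum_mul]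
  ring

theorem sum_mul_sq_sub_mean {ι R : Type*} [CommRing R] (s : Finset ι) (μ g : ι → R)
    (hμ : ∑ j ∈ s, μ j = 1) :
    ∑ j ∈ s, μ j * (g j - ∑ k ∈ s, μ k * g k) ^ 2 =
      ∑ j ∈ s, μ j * g j ^ 2 - (∑ j ∈ s, μ j * g j) ^ 2 := by
  set m := ∑ k ∈ s, μ k * g k
  have h : ∀ j, μ j * (g j - m) ^ 2 = μ j * g j ^ 2 - 2 * m * (μ j * g j) + m ^ 2 * μ j := by
    intro j; ring
  simp only [h, sum_add_distrib, sum_sub_distrib, ← mul_sum, hμ]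
  ring

theorem sum_Ico_sub_telescope {M : Type*} [AddCommGroup M] (g : ℤ → M) {j k : ℤ} (hjk : j ≤ k) :
    ∑ i ∈ Ico j k, (g (i + 1) - g i) = g k - g j := by
  induction k, hjk using Int.leInduction with
  | base => simp
  | succ k hjk ih =>
    rw [← insert_Ico_right_eq_Ico_add_one hjk, sum_insert (by simp), ih]
    abel

theorem sum_Ioc_sub_telescope {M : Type*} [AddCommGroup M] (F : ℤ → M) {a b : ℤ} (hab : a ≤ b) :
    ∑ j ∈ Ioc a b, (F (j - 1) - F j) = F a - F b := by
  induction b, hab using Int.leInduction with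
  | base => simp
  | succ b hab ih =>
    rw [← insert_Ioc_right_eq_Ioc_add_one hab, sum_insert (by simp), ih, add_sub_cancel_right]
    abel

theorem sq_sub_le_mul_sum_sq_div {g v Δ : ℤ → ℝ} {j k : ℤ} (hjk : j ≤ k)
    (hΔ : ∀ i ∈ Ico j k, Δ i = v (i + 1) - v i) (hΔpos : ∀ i ∈ Ico j k, 0 < Δ i) :
    (g k - g j) ^ 2 ≤ (v k - v j) * ∑ i ∈ Ico j k, (g (i + 1) - g i) ^ 2 / Δ i := by
  rw [← sum_Ico_sub_telescope g hjk, ← sum_Ico_sub_telescope v hjk, ← sum_congr rfl hΔ]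
  exact sum_sq_le_sum_mul_sum_of_sq_le_mul _ (fun i hi => (hΔpos i hi).le)
    (fun i hi => div_nonneg (sq_nonneg _) (hΔpos i hi).le)
    (fun i hi => (mul_div_cancel₀ _ (hΔpos i hi).ne').ge)

section Stein

variable {a b : ℤ} {μ v Ms : ℤ → ℝ}

theorem sum_Ioc_mul_eq_right (hstein : ∀ j ∈ Ioc a b, μ j * v j = Ms (j - 1) - Ms j)
    (hb : Ms b = 0) {i : ℤ} (hai : a ≤ i) (hib : i ≤ b) :
    ∑ k ∈ Ioc i b, μ k * v k = Ms i := by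
  rw [sum_congr rfl fun k hk => hstein k (Ioc_subset_Ioc_left hai hk),
    sum_Ioc_sub_telescope Ms hib, hb, sub_zero]

theorem sum_Ioc_mul_eq_left (hstein : ∀ j ∈ Ioc a b, μ j * v j = Ms (j - 1) - Ms j)
    (ha : Ms a = 0) {i : ℤ} (hai : a ≤ i) (hib : i ≤ b) :
    ∑ j ∈ Ioc a i, μ j * v j = -Ms i := by
  rw [sum_congr rfl fun k hk => hstein k (Ioc_subset_Ioc_right hib hk),
    sum_Ioc_sub_telescope Ms hai, ha, zero_sub]

theorem sum_Ioc_sum_Ioc_mul_mul_sub (hmass : ∑ j ∈ Ioc a b, μ j = 1)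
    (hstein : ∀ j ∈ Ioc a b, μ j * v j = Ms (j - 1) - Ms j) (ha : Ms a = 0) (hb : Ms b = 0)
    {i : ℤ} (hai : a ≤ i) (hib : i ≤ b) :
    ∑ j ∈ Ioc a i, ∑ k ∈ Ioc i b, μ j * μ k * (v k - v j) = Ms i := by
  have hsplit : ∑ j ∈ Ioc a i, μ j + ∑ k ∈ Ioc i b, μ k = 1 := by
    rw [← sum_union (Ioc_disjoint_Ioc_of_le le_rfl), Ioc_union_Ioc_eq_Ioc hai hib, hmass]
  have h : ∀ j k, μ j * μ k * (v k - v j) = μ j * (μ k * v k) - μ k * (μ j * v j) := by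
    intro j k; ring
  simp only [h, sum_sub_distrib, ← mul_sum, ← sum_mul, sum_Ioc_mul_eq_right hstein hb hai hib,
    sum_Ioc_mul_eq_left hstein ha hai hib]
  linear_combination Ms i * hsplit

theorem sum_Ioc_sum_Ioc_mul_mul_sub_mul_sum_Ico (hmass : ∑ j ∈ Ioc a b, μ j = 1)
    (hstein : ∀ j ∈ Ioc a b, μ j * v j = Ms (j - 1) - Ms j) (ha : Ms a = 0) (hb : Ms b = 0)
    (e : ℤ → ℝ) :
    ∑ j ∈ Ioc a b, ∑ k ∈ Ioc a b, μ j * μ k * ((v k - v j) * ∑ i ∈ Ico j k, e i) =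
      ∑ i ∈ Ioo a b, e i * Ms i := by
  calc ∑ j ∈ Ioc a b, ∑ k ∈ Ioc a b, μ j * μ k * ((v k - v j) * ∑ i ∈ Ico j k, e i)
      = ∑ j ∈ Ioc a b, ∑ i ∈ Ico j b, ∑ k ∈ Ioc i b, μ j * μ k * ((v k - v j) * e i) := by
        refine sum_congr rfl fun j hj => ?_
        simp only [mul_sum]
        exact sum_comm' fun k i => by simp only [mem_Ioc, mem_Ico] at hj ⊢; omega
    _ = ∑ i ∈ Ioo a b, ∑ j ∈ Ioc a i, ∑ k ∈ Ioc i b, μ j * μ k * ((v k - v j) * e i) :=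
        sum_comm' fun j i => by simp only [mem_Ioc, mem_Ico, mem_Ioo]; omega
    _ = ∑ i ∈ Ioo a b, e i * Ms i := by
        refine sum_congr rfl fun i hi => ?_
        rw [mem_Ioo] at hi
        have h : ∀ j k, μ j * μ k * ((v k - v j) * e i) = e i * (μ j * μ k * (v k - v j)) := by
          intro j k; ring
        simp only [h, ← mul_sum]
        rw [sum_Ioc_sum_Ioc_mul_mul_sub hmass hstein ha hb hi.1.le hi.2.le]

theorem sq_sub_le_add_of_mem_Ioc {g Δ : ℤ → ℝ}
    (hΔ : ∀ i ∈ Ioo a b, Δ i = v (i + 1) - v i) (hΔpos : ∀ i ∈ Ioo a b, 0 < Δ i)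
    {j k : ℤ} (hj : j ∈ Ioc a b) (hk : k ∈ Ioc a b) :
    (g k - g j) ^ 2 ≤ (v k - v j) * ∑ i ∈ Ico j k, (g (i + 1) - g i) ^ 2 / Δ i +
      (v j - v k) * ∑ i ∈ Ico k j, (g (i + 1) - g i) ^ 2 / Δ i := by
  rw [mem_Ioc] at hj hk
  have hsub : ∀ {j k : ℤ}, a < j → k ≤ b → Ico j k ⊆ Ioo a b := fun hj hk i hi => by
    simp only [mem_Ico, mem_Ioo] at hi ⊢; omega
  rcases le_total j k with hjk | hkj
  · rw [Ico_eq_empty_of_le hjk, sum_empty, mul_zero, add_zero]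
    exact sq_sub_le_mul_sum_sq_div hjk (fun i hi => hΔ i (hsub hj.1 hk.2 hi))
      (fun i hi => hΔpos i (hsub hj.1 hk.2 hi))
  · rw [Ico_eq_empty_of_le hkj, sum_empty, mul_zero, zero_add, ← neg_sub, neg_sq]
    exact sq_sub_le_mul_sum_sq_div hkj (fun i hi => hΔ i (hsub hk.1 hj.2 hi))
      (fun i hi => hΔpos i (hsub hk.1 hj.2 hi))

theorem sum_mul_sq_sub_mean_le_of_stein {Δ : ℤ → ℝ} (g : ℤ → ℝ)
    (hμ : ∀ j ∈ Ioc a b, 0 ≤ μ j) (hmass : ∑ j ∈ Ioc a b, μ j = 1)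
    (hstein : ∀ j ∈ Ioc a b, μ j * v j = Ms (j - 1) - Ms j) (ha : Ms a = 0) (hb : Ms b = 0)
    (hΔ : ∀ i ∈ Ioo a b, Δ i = v (i + 1) - v i) (hΔpos : ∀ i ∈ Ioo a b, 0 < Δ i) :
    ∑ j ∈ Ioc a b, μ j * (g j - ∑ k ∈ Ioc a b, μ k * g k) ^ 2 ≤
      ∑ i ∈ Ioo a b, (g (i + 1) - g i) ^ 2 / Δ i * Ms i := by
  set K : ℤ → ℤ → ℝ := fun j k => (v k - v j) * ∑ i ∈ Ico j k, (g (i + 1) - g i) ^ 2 / Δ i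
  have hpairs : ∑ j ∈ Ioc a b, ∑ k ∈ Ioc a b, μ j * μ k * (g k - g j) ^ 2 ≤
      ∑ j ∈ Ioc a b, ∑ k ∈ Ioc a b, μ j * μ k * (K j k + K k j) :=
    sum_le_sum fun j hj => sum_le_sum fun k hk => mul_le_mul_of_nonneg_left
      (sq_sub_le_add_of_mem_Ioc hΔ hΔpos hj hk) (mul_nonneg (hμ j hj) (hμ k hk))
  have hsymm : ∑ j ∈ Ioc a b, ∑ k ∈ Ioc a b, μ j * μ k * (K j k + K k j) =
      2 * ∑ j ∈ Ioc a b, ∑ k ∈ Ioc a b, μ j * μ k * K j k := by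
    simp only [mul_add, sum_add_distrib]
    rw [sum_comm (f := fun j k => μ j * μ k * K k j)]
    simp only [mul_comm (μ _) (μ _)]
    ring
  rw [sum_sum_mul_mul_sub_sq, hmass, one_mul, ← sum_mul_sq_sub_mean _ _ _ hmass, hsymm,
    sum_Ioc_sum_Ioc_mul_mul_sub_mul_sum_Ico hmass hstein ha hb] at hpairs
  exact le_of_mul_le_mul_left hpairs two_pos

end Stein

theorem discrete_gaussian_poincare_general (L : ℕ)
    (w : ℤ → ℝ)
    (hmono : ∀ j ∈ Finset.Icc (-(L : ℤ)) (L : ℤ), ∀ k ∈ Finset.Icc (-(L : ℤ)) (L : ℤ),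
        j < k → w j < w k)
    (v : ℤ → ℝ)
    (Δv : ℤ → ℝ) (hΔv : ∀ j, Δv j = w j - w (j - 1))
    (Δvd : ℤ → ℝ)
    (hΔvd : ∀ j ∈ Finset.Icc (-(L : ℤ) + 1) ((L : ℤ) - 1), Δvd j = v (j + 1) - v j)
    (hΔvdpos : ∀ j ∈ Finset.Icc (-(L : ℤ)) (L : ℤ), 0 < Δvd j)
    (Mstar : ℤ → ℝ)
    (hMb : Mstar (L : ℤ) = 0) (hMb' : Mstar (-(L : ℤ)) = 0)
    (Mc : ℤ → ℝ)
    (hMc : ∀ j ∈ Finset.Icc (-(L : ℤ) + 1) (L : ℤ),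
        Mc j = (Mstar (j - 1) - Mstar j) / (v j * Δv j))
    (hMcpos : ∀ j ∈ Finset.Icc (-(L : ℤ) + 1) (L : ℤ), 0 < Mc j)
    (hmass : ∑ j ∈ Finset.Icc (-(L : ℤ) + 1) (L : ℤ), Mc j * Δv j = 1)
    (f : ℤ → ℝ) (ρ : ℝ)
    (hρ : ρ = ∑ j ∈ Finset.Icc (-(L : ℤ) + 1) (L : ℤ), f j * Δv j) :
    ∑ j ∈ Finset.Icc (-(L : ℤ) + 1) (L : ℤ),
        (f j - ρ * Mc j) ^ 2 * (Mc j)⁻¹ * Δv j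
      ≤ ∑ j ∈ Finset.Icc (-(L : ℤ)) (L : ℤ),
          ((f (j + 1) / Mc (j + 1) - f j / Mc j) / Δvd j) ^ 2 * Mstar j * Δvd j := by
  set N : ℤ := (L : ℤ)
  rw [Icc_add_one_left_eq_Ioc] at hMc hMcpos hmass hρ ⊢
  rw [Icc_add_one_sub_one_eq_Ioo] at hΔvd
  have hΔvpos : ∀ j ∈ Ioc (-N) N, 0 < Δv j := fun j hj => by
    rw [mem_Ioc] at hj; rw [hΔv, sub_pos]
    exact hmono _ (by rw [mem_Icc]; omega) _ (by rw [mem_Icc]; omega) (by omega)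
  have hstein : ∀ j ∈ Ioc (-N) N, Mc j * Δv j * v j = Mstar (j - 1) - Mstar j := fun j hj => by
    -- `Mc j ≠ 0` rules out the junk value `x / 0 = 0`
    have hden : v j * Δv j ≠ 0 := fun h0 => (hMcpos j hj).ne' (by rw [hMc j hj, h0, div_zero])
    rw [mul_assoc, mul_comm (Δv j), ← eq_div_iff hden]
    exact hMc j hj
  have hmean : ρ = ∑ j ∈ Ioc (-N) N, Mc j * Δv j * (f j / Mc j) := by
    rw [hρ]
    exact sum_congr rfl fun j hj => by field_simp [(hMcpos j hj).ne']
  have key := sum_mul_sq_sub_mean_le_of_stein (fun j => f j / Mc j)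
    (fun j hj => (mul_pos (hMcpos j hj) (hΔvpos j hj)).le) hmass hstein hMb' hMb hΔvd
    (fun i hi => hΔvdpos i (Ioo_subset_Icc_self hi))
  rw [← hmean] at key
  refine (le_of_eq (sum_congr rfl fun j hj => ?_)).trans (key.trans_eq ?_)
  · field_simp [(hMcpos j hj).ne']
  refine (sum_congr rfl fun i hi => ?_).trans (sum_subset Ioo_subset_Icc_self fun j hj hj' => ?_)
  · field_simp [(hΔvdpos i (Ioo_subset_Icc_self hi)).ne']
  · obtain rfl | rfl : j = -N ∨ j = N := by
      simp only [mem_Icc, mem_Ioo] at hj hj'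
      omega
    · simp [hMb']
    · simp [hMb]

/-- Discrete Gaussian Poincaré inequality on a bounded symmetric velocity grid.
Interfaces are `w j = v_{j+1/2}` for `j ∈ J* = {-L,…,L}` (interface `j` of the
paper is `j+1/2`), cells `V_j = (w (j-1), w j)` with midpoints `v j` and widths
`Δv j`, dual widths `Δvd j = v (j+1) - v j`.  The interface Maxwellian `Mstar`
vanishes at the endpoints, is symmetric, and defines the cell Maxwellian
`Mc j = (Mstar (j-1) - Mstar j)/(v j Δv j) > 0` of unit mass.  Then for every
`f`, with `ρ = Σ_j f_j Δv_j` and `γ_j = 1/Mc j`,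
Σ_j |f_j - ρ Mc_j|² γ_j Δv_j ≤ Σ_{j∈J*} |(f_{j+1}/Mc_{j+1} - f_j/Mc_j)/Δvd_j|² Mstar_j Δvd_j. -/
theorem discrete_gaussian_poincare (L : ℕ) (hL : 1 ≤ L)
    (w : ℤ → ℝ)
    (hmono : ∀ j ∈ Finset.Icc (-(L : ℤ)) (L : ℤ), ∀ k ∈ Finset.Icc (-(L : ℤ)) (L : ℤ),
        j < k → w j < w k)
    (hwsym : ∀ j, w j = - w (-j))
    (v : ℤ → ℝ) (hv : ∀ j, v j = (w (j - 1) + w j) / 2)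
    (Δv : ℤ → ℝ) (hΔv : ∀ j, Δv j = w j - w (j - 1))
    (Δvd : ℤ → ℝ)
    (hΔvd : ∀ j ∈ Finset.Icc (-(L : ℤ) + 1) ((L : ℤ) - 1), Δvd j = v (j + 1) - v j)
    (hΔvdpos : ∀ j ∈ Finset.Icc (-(L : ℤ)) (L : ℤ), 0 < Δvd j)
    (Mstar : ℤ → ℝ)
    (hMb : Mstar (L : ℤ) = 0) (hMb' : Mstar (-(L : ℤ)) = 0)
    (hMnn : ∀ j, 0 ≤ Mstar j)
    (hMssym : ∀ j, Mstar j = Mstar (-j))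
    (Mc : ℤ → ℝ)
    (hMc : ∀ j ∈ Finset.Icc (-(L : ℤ) + 1) (L : ℤ),
        Mc j = (Mstar (j - 1) - Mstar j) / (v j * Δv j))
    (hMcpos : ∀ j ∈ Finset.Icc (-(L : ℤ) + 1) (L : ℤ), 0 < Mc j)
    (hmass : ∑ j ∈ Finset.Icc (-(L : ℤ) + 1) (L : ℤ), Mc j * Δv j = 1)
    (f : ℤ → ℝ) (ρ : ℝ)
    (hρ : ρ = ∑ j ∈ Finset.Icc (-(L : ℤ) + 1) (L : ℤ), f j * Δv j) :
    ∑ j ∈ Finset.Icc (-(L : ℤ) + 1) (L : ℤ),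
        (f j - ρ * Mc j) ^ 2 * (Mc j)⁻¹ * Δv j
      ≤ ∑ j ∈ Finset.Icc (-(L : ℤ)) (L : ℤ),
          ((f (j + 1) / Mc (j + 1) - f j / Mc j) / Δvd j) ^ 2 * Mstar j * Δvd j :=
  discrete_gaussian_poincare_general L w hmono v Δv hΔv Δvd hΔvd hΔvdpos Mstar hMb hMb' Mc hMc
    hMcpos hmass f ρ hρ
end

section
/- Discrete Poincaré inequality on the torus: for a uniform subdivision of the 1D torus of length 1 into N cells with N odd, there is a constant C_P = 1/(N |sin(π/N)|) such that any vector (φ_i)_{i∈ℤ/Nℤ} with Σ_i Δx φ_i = 0 satisfies Σ_i Δx φ_i² ≤ C_P² Σ_i Δx ((φ_{i+1} - φ_{i-1})/(2Δx))², where Δx = 1/N. -/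
/-!
Under the discrete Fourier transform on `ZMod N` the centered difference `φ (j + 1) - φ (j - 1)`
becomes multiplication by `e(k) - e(-k) = 2 i sin (2πk/N)`, and Parseval's identity preserves
`ℓ²` norms up to the factor `N`. A zero-mean `φ` has vanishing zeroth Fourier coefficient, and
for `N` odd every other frequency has `|sin (2πk/N)| ≥ sin (π/N)`, since `2k` is then a nonzero
residue mod `N` and `|sin (π j / N)| ≥ sin (π / N)` for `0 < j < N` by concavity of `sin`.
-/

open Finset Complex
open scoped Real ComplexConjugate

namespace Real

lemma sin_pi_div_pos {N : ℕ} (hN : 1 < N) : 0 < sin (π / N) := by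
  have hN' : (1 : ℝ) < N := by exact_mod_cast hN
  exact sin_pos_of_pos_of_lt_pi (by positivity) (div_lt_self pi_pos hN')

lemma sin_le_sin_of_mem_Icc {a x : ℝ} (ha : 0 ≤ a) (hx : x ∈ Set.Icc a (π - a)) :
    sin a ≤ sin x := by
  have hs : Set.Icc a (π - a) ⊆ Set.Icc 0 π := Set.Icc_subset_Icc ha (by linarith)
  simpa [sin_pi_sub] using strictConcaveOn_sin_Icc.concaveOn.min_le_of_mem_Icc
    (hs ⟨le_rfl, hx.1.trans hx.2⟩) (hs ⟨hx.1.trans hx.2, le_rfl⟩) hx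

lemma sin_pi_div_le_sin_pi_mul_div {N j : ℕ} (hj : 0 < j) (hjN : j < N) :
    sin (π / N) ≤ sin (π * j / N) := by
  have hN : (0 : ℝ) < N := by exact_mod_cast hj.trans hjN
  have hj' : (1 : ℝ) ≤ j := by exact_mod_cast hj
  have hjN' : (j : ℝ) + 1 ≤ N := by exact_mod_cast hjN
  refine sin_le_sin_of_mem_Icc (by positivity) ⟨?_, ?_⟩
  · rw [div_le_div_iff_of_pos_right hN]; nlinarith [pi_pos]
  · rw [le_sub_iff_add_le, ← add_div, div_le_iff₀ hN]; nlinarith [pi_pos]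

lemma sin_pi_div_le_abs_sin_two_pi_mul_div {N m : ℕ} (hN : Odd N) (hm : 0 < m) (hmN : m < N) :
    sin (π / N) ≤ |sin (2 * π * m / N)| := by
  have h2m : 2 * m ≠ N := by rintro rfl; exact Nat.not_odd_iff_even.mpr (even_two_mul m) hN
  rcases lt_or_gt_of_ne h2m with h | h
  · have key := sin_pi_div_le_sin_pi_mul_div (by omega) h
    rw [Nat.cast_mul, Nat.cast_ofNat, ← mul_assoc, mul_comm π 2] at key
    exact key.trans (le_abs_self _)
  · have key := sin_pi_div_le_sin_pi_mul_div (N := N) (j := 2 * m - N) (by omega) (by omega)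
    have hN : (N : ℝ) ≠ 0 := by exact_mod_cast hN.pos.ne'
    rw [Nat.cast_sub h.le, show π * (((2 * m : ℕ) : ℝ) - N) / N = 2 * π * m / N - π by
      push_cast; field_simp, sin_sub_pi] at key
    exact key.trans (neg_le_abs _)

end Real

namespace ZMod

variable {N : ℕ} [NeZero N]

lemma conj_stdAddChar (j : ZMod N) : conj (stdAddChar j) = stdAddChar (-j) := by
  rw [stdAddChar_apply, stdAddChar_apply, AddChar.map_neg_eq_inv, Circle.coe_inv_eq_conj]

lemma sum_dft_mul (Φ Ψ : ZMod N → ℂ) : ∑ k, 𝓕 Φ k * Ψ k = ∑ j, Φ j * 𝓕 Ψ j := by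
  simp only [dft_apply, smul_eq_mul, sum_mul, mul_sum]
  rw [sum_comm]
  refine sum_congr rfl fun j _ => sum_congr rfl fun k _ => ?_
  rw [mul_comm j k]
  ring

lemma dft_conj (Φ : ZMod N → ℂ) (k : ZMod N) : 𝓕 (fun j => conj (Φ j)) k = conj (𝓕 Φ (-k)) := by
  simp only [dft_apply, smul_eq_mul, map_sum, map_mul, conj_stdAddChar, mul_neg, neg_neg]

theorem sum_normSq_dft (Φ : ZMod N → ℂ) :
    ∑ k, normSq (𝓕 Φ k) = N * ∑ j, normSq (Φ j) := by
  have h := sum_dft_mul Φ fun k => conj (𝓕 Φ k)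
  simp only [dft_conj, dft_dft, neg_neg, smul_eq_mul, map_mul, conj_natCast, mul_conj,
    mul_left_comm _ (N : ℂ), ← mul_sum] at h
  exact_mod_cast h

lemma dft_comp_add_right (Φ : ZMod N → ℂ) (c k : ZMod N) :
    𝓕 (fun j => Φ (j + c)) k = stdAddChar (c * k) * 𝓕 Φ k := by
  simp only [dft_apply, smul_eq_mul, mul_sum]
  refine Fintype.sum_equiv (Equiv.addRight c) _ _ fun j => ?_
  rw [Equiv.coe_addRight, ← mul_assoc, ← AddChar.map_add_eq_mul]
  ring_nf

lemma dft_centeredDiff (Φ : ZMod N → ℂ) (k : ZMod N) :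
    𝓕 (fun j => Φ (j + 1) - Φ (j - 1)) k = (stdAddChar k - stdAddChar (-k)) * 𝓕 Φ k := by
  have h : (fun j => Φ (j + 1) - Φ (j - 1)) = (fun j => Φ (j + 1)) - fun j => Φ (j + -1) := by
    simp only [← sub_eq_add_neg]; rfl
  rw [h, map_sub, Pi.sub_apply, dft_comp_add_right, dft_comp_add_right, one_mul, neg_one_mul]
  ring

lemma normSq_stdAddChar_sub_stdAddChar_neg (k : ZMod N) :
    normSq (stdAddChar k - stdAddChar (-k)) = 4 * Real.sin (2 * π * k.val / N) ^ 2 := by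
  rw [← conj_stdAddChar, sub_conj, stdAddChar_apply, toCircle_eq_circleExp, Circle.coe_exp,
    exp_ofReal_mul_I_im, normSq_mul, normSq_I, normSq_ofReal]
  ring_nf

lemma one_lt_of_ne_zero {k : ZMod N} (hk : k ≠ 0) : 1 < N := by
  have := val_pos.mpr hk
  have := val_lt k
  omega

lemma four_mul_sin_sq_le_normSq_stdAddChar_sub (hN : Odd N) {k : ZMod N} (hk : k ≠ 0) :
    4 * Real.sin (π / N) ^ 2 ≤ normSq (stdAddChar k - stdAddChar (-k)) := by
  have h := Real.sin_pi_div_le_abs_sin_two_pi_mul_div hN (val_pos.mpr hk) (val_lt k)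
  have h0 := Real.sin_pi_div_pos (one_lt_of_ne_zero hk)
  rw [normSq_stdAddChar_sub_stdAddChar_neg, ← sq_abs (Real.sin (2 * π * k.val / N))]
  gcongr

theorem sum_normSq_le_of_dft_zero (hN : Odd N) {Φ : ZMod N → ℂ} (hΦ : 𝓕 Φ 0 = 0) :
    ∑ j, normSq (Φ j) ≤
      (4 * Real.sin (π / N) ^ 2)⁻¹ * ∑ j, normSq (Φ (j + 1) - Φ (j - 1)) := by
  have hterm (k : ZMod N) : normSq (𝓕 Φ k) ≤
      (4 * Real.sin (π / N) ^ 2)⁻¹ * normSq (𝓕 (fun j => Φ (j + 1) - Φ (j - 1)) k) := by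
    rcases eq_or_ne k 0 with rfl | hk
    · rw [hΦ, map_zero]
      exact mul_nonneg (by positivity) (normSq_nonneg _)
    · have hpos : 0 < 4 * Real.sin (π / N) ^ 2 := by
        have := Real.sin_pi_div_pos (one_lt_of_ne_zero hk)
        positivity
      rw [dft_centeredDiff, normSq_mul, ← mul_assoc]
      exact le_mul_of_one_le_left (normSq_nonneg _)
        ((one_le_inv_mul₀ hpos).mpr (four_mul_sin_sq_le_normSq_stdAddChar_sub hN hk))
  have hN : (0 : ℝ) < N := by exact_mod_cast hN.pos
  refine le_of_mul_le_mul_left ?_ hN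
  calc (N : ℝ) * ∑ j, normSq (Φ j) = ∑ k, normSq (𝓕 Φ k) := (sum_normSq_dft Φ).symm
    _ ≤ ∑ k, (4 * Real.sin (π / N) ^ 2)⁻¹ *
          normSq (𝓕 (fun j => Φ (j + 1) - Φ (j - 1)) k) := sum_le_sum fun k _ => hterm k
    _ = N * ((4 * Real.sin (π / N) ^ 2)⁻¹ * ∑ j, normSq (Φ (j + 1) - Φ (j - 1))) := by
      rw [← mul_sum, sum_normSq_dft]
      ring

theorem sum_sq_le_of_sum_eq_zero (hN : Odd N) {φ : ZMod N → ℝ} (hφ : ∑ j, φ j = 0) :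
    ∑ j, φ j ^ 2 ≤ (4 * Real.sin (π / N) ^ 2)⁻¹ * ∑ j, (φ (j + 1) - φ (j - 1)) ^ 2 := by
  have h := sum_normSq_le_of_dft_zero hN (Φ := fun j => (φ j : ℂ))
    (by rw [dft_apply_zero]; exact_mod_cast hφ)
  simpa only [← ofReal_sub, normSq_ofReal, ← sq] using h

end ZMod

/-- Discrete Poincaré inequality on the 1D torus, uniform mesh of size Δx = 1/N,
N odd: for zero-mean φ, Σ_i Δx φ_i² ≤ C_P² Σ_i Δx ((φ_{i+1}-φ_{i-1})/(2Δx))²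
with C_P = 1/(N |sin(π/N)|). -/
theorem discrete_poincare_torus (N : ℕ) [NeZero N] (hodd : Odd N)
    (φ : ZMod N → ℝ)
    (hmean : ∑ i : ZMod N, (1 / (N : ℝ)) * φ i = 0) :
    ∑ i : ZMod N, (1 / (N : ℝ)) * (φ i) ^ 2
      ≤ (1 / ((N : ℝ) * |Real.sin (Real.pi / N)|)) ^ 2 *
          ∑ i : ZMod N, (1 / (N : ℝ)) * ((φ (i + 1) - φ (i - 1)) / (2 * (1 / (N : ℝ)))) ^ 2 := by
  have hN : (N : ℝ) ≠ 0 := by exact_mod_cast hodd.pos.ne'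
  have hsum : ∑ i, φ i = 0 := by
    rwa [← mul_sum, mul_eq_zero, or_iff_right (by positivity)] at hmean
  calc ∑ i, 1 / (N : ℝ) * φ i ^ 2
      ≤ 1 / N * ((4 * Real.sin (π / N) ^ 2)⁻¹ * ∑ i, (φ (i + 1) - φ (i - 1)) ^ 2) := by
        rw [← mul_sum]
        gcongr
        exact ZMod.sum_sq_le_of_sum_eq_zero hodd hsum
    _ = _ := by
        rw [mul_sum, mul_sum, mul_sum]
        refine sum_congr rfl fun i _ => ?_
        rw [div_pow, mul_pow, sq_abs]
        field_simp
        ring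
end

section
/- Discrete entropy estimate for the BGK scheme: if (f^{n+1}_{ij}) solves ε Δx_i Δv_j (f^{n+1}_{ij} - f^n_{ij}) + Δt (F^{n+1}_{i+1/2,j} - F^{n+1}_{i-1/2,j}) = (Δt/ε) Δx_i Δv_j (ρ^{n+1}_i M_j - f^{n+1}_{ij}) with centered transport fluxes F_{i+1/2,j} = v_j (f_{i+1,j} + f_{ij}) Δv_j / 2, then (‖f^{n+1}‖²_{2,γ} - ‖f^n‖²_{2,γ})/(2Δt) + (1/ε²) ‖f^{n+1} - ρ^{n+1} M‖²_{2,γ} ≤ 0, where ρ^n_i = Σ_j Δv_j f^n_{ij}. -/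
/-!
Multiply the scheme by `f^{n+1}_{ij} γ_j` and sum over `i, j`. The centered transport term
telescopes to zero by periodicity. Since `ρ^{n+1} M` has the same mass as `f^{n+1}` and
`∑_j M_j Δv_j = 1`, the relaxation term equals `-(Δt/ε) ‖f^{n+1} - ρ^{n+1} M‖²_{2,γ}`.
Finally `a (a - b) ≥ (a² - b²)/2` bounds the time-difference term from below by
`(ε/2) (‖f^{n+1}‖²_{2,γ} - ‖fⁿ‖²_{2,γ})`.
-/

open Finset

theorem sum_mul_sub_shift_eq_zero {G R : Type*} [AddCommGroup G] [Fintype G] [CommRing R]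
    (u : G → R) (a : G) : ∑ i, u i * (u (i + a) - u (i - a)) = 0 := by
  simp only [mul_sub, sum_sub_distrib, sub_eq_zero]
  exact Fintype.sum_equiv (Equiv.addRight a) _ _ fun i => by
    simp only [Equiv.coe_addRight, add_sub_cancel_right, mul_comm]

theorem sum_relaxation_mul_eq_neg_sum_sq {J K : Type*} [Fintype J] [Field K]
    (Δv M g : J → K) (hM : ∀ j, M j ≠ 0) (hmass : ∑ j, M j * Δv j = 1)
    (ρ : K) (hρ : ρ = ∑ j, Δv j * g j) :
    ∑ j, Δv j * (ρ * M j - g j) * (g j * (M j)⁻¹)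
      = -∑ j, (g j - ρ * M j) ^ 2 * (M j)⁻¹ * Δv j := by
  have hterm : ∀ j, Δv j * (ρ * M j - g j) * (g j * (M j)⁻¹)
      = -((g j - ρ * M j) ^ 2 * (M j)⁻¹ * Δv j) + ρ * (ρ * (M j * Δv j) - Δv j * g j) := by
    intro j
    field_simp [hM j]
    ring
  -- the correction term vanishes because `ρ M` and `g` have the same mass
  simp only [hterm, sum_add_distrib, sum_neg_distrib, ← mul_sum, sum_sub_distrib, hmass, ← hρ]
  ring

theorem sq_sub_sq_le_two_mul_mul_sub {R : Type*} [CommRing R] [LinearOrder R]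
    [IsStrictOrderedRing R] (a b : R) : a ^ 2 - b ^ 2 ≤ 2 * a * (a - b) := by
  nlinarith [sq_nonneg (a - b)]

theorem bgk_scheme_energy_identity (N : ℕ) [NeZero N] {J : Type*} [Fintype J]
    (Δx : ZMod N → ℝ) (Δv v Mw : J → ℝ) (hM : ∀ j, Mw j ≠ 0)
    (hmass : ∑ j, Mw j * Δv j = 1) (ε Δt : ℝ) (f fnext : ZMod N → J → ℝ)
    (ρnext : ZMod N → ℝ) (hρ : ∀ i, ρnext i = ∑ j, Δv j * fnext i j)
    (hscheme : ∀ i j,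
      ε * Δx i * Δv j * (fnext i j - f i j)
        + Δt * (v j * (fnext (i + 1) j + fnext i j) * Δv j / 2
              - v j * (fnext i j + fnext (i - 1) j) * Δv j / 2)
      = (Δt / ε) * Δx i * Δv j * (ρnext i * Mw j - fnext i j)) :
    ε * ∑ i, ∑ j, 2 * fnext i j * (fnext i j - f i j) * (Mw j)⁻¹ * Δx i * Δv j
      = -(2 * (Δt / ε)) *
          ∑ i, ∑ j, (fnext i j - ρnext i * Mw j) ^ 2 * (Mw j)⁻¹ * Δx i * Δv j := by
  have htested : ∀ i j, ε * (2 * fnext i j * (fnext i j - f i j) * (Mw j)⁻¹ * Δx i * Δv j)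
      = 2 * (Δt / ε) * Δx i * (Δv j * (ρnext i * Mw j - fnext i j) * (fnext i j * (Mw j)⁻¹))
        - Δt * v j * Δv j * (Mw j)⁻¹
          * (fnext i j * (fnext (i + 1) j - fnext (i - 1) j)) := by
    intro i j
    linear_combination 2 * fnext i j * (Mw j)⁻¹ * hscheme i j
  have htransport : ∑ i, ∑ j, Δt * v j * Δv j * (Mw j)⁻¹
      * (fnext i j * (fnext (i + 1) j - fnext (i - 1) j)) = 0 := by
    rw [sum_comm]
    refine sum_eq_zero fun j _ => ?_
    rw [← mul_sum, sum_mul_sub_shift_eq_zero (fun i => fnext i j) 1, mul_zero]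
  simp only [mul_sum, htested, sum_sub_distrib, htransport, sub_zero]
  refine sum_congr rfl fun i _ => ?_
  rw [← mul_sum, sum_relaxation_mul_eq_neg_sum_sq Δv Mw (fnext i) hM hmass _ (hρ i), mul_neg,
    mul_sum, ← sum_neg_distrib]
  exact sum_congr rfl fun j _ => by ring

/-- Discrete entropy estimate for the implicit BGK scheme with centered transport
fluxes: (‖f^{n+1}‖²_{2,γ} - ‖fⁿ‖²_{2,γ})/(2Δt) + (1/ε²)‖f^{n+1} - ρ^{n+1}M‖²_{2,γ} ≤ 0. -/
theorem discrete_entropy_estimate_BGK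
    (N : ℕ) [NeZero N] {J : Type*} [Fintype J]
    (Δx : ZMod N → ℝ) (hΔx : ∀ i, 0 < Δx i)
    (Δv v Mw : J → ℝ) (hΔv : ∀ j, 0 < Δv j) (hM : ∀ j, 0 < Mw j)
    (hmass : ∑ j, Mw j * Δv j = 1)
    (ε Δt : ℝ) (hε : 0 < ε) (hΔt : 0 < Δt)
    (f fnext : ZMod N → J → ℝ)
    (ρnext : ZMod N → ℝ) (hρ : ∀ i, ρnext i = ∑ j, Δv j * fnext i j)
    (hscheme : ∀ i j,
      ε * Δx i * Δv j * (fnext i j - f i j)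
        + Δt * (v j * (fnext (i + 1) j + fnext i j) * Δv j / 2
              - v j * (fnext i j + fnext (i - 1) j) * Δv j / 2)
      = (Δt / ε) * Δx i * Δv j * (ρnext i * Mw j - fnext i j)) :
    ((∑ i, ∑ j, (fnext i j) ^ 2 * (Mw j)⁻¹ * Δx i * Δv j)
        - (∑ i, ∑ j, (f i j) ^ 2 * (Mw j)⁻¹ * Δx i * Δv j)) / (2 * Δt)
      + (1 / ε ^ 2) *
          ∑ i, ∑ j, (fnext i j - ρnext i * Mw j) ^ 2 * (Mw j)⁻¹ * Δx i * Δv j ≤ 0 := by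
  have hweight : ∀ i j, 0 ≤ (Mw j)⁻¹ * Δx i * Δv j := fun i j =>
    mul_nonneg (mul_nonneg (inv_nonneg.2 (hM j).le) (hΔx i).le) (hΔv j).le
  set A := ∑ i, ∑ j, (fnext i j) ^ 2 * (Mw j)⁻¹ * Δx i * Δv j
  set B := ∑ i, ∑ j, (f i j) ^ 2 * (Mw j)⁻¹ * Δx i * Δv j
  set D := ∑ i, ∑ j, (fnext i j - ρnext i * Mw j) ^ 2 * (Mw j)⁻¹ * Δx i * Δv j
  set S := ∑ i, ∑ j, 2 * fnext i j * (fnext i j - f i j) * (Mw j)⁻¹ * Δx i * Δv j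
  have hdiff : A - B ≤ S := by
    simp only [A, B, S, ← sum_sub_distrib]
    refine sum_le_sum fun i _ => sum_le_sum fun j _ => ?_
    linarith [mul_le_mul_of_nonneg_right (sq_sub_sq_le_two_mul_mul_sub (fnext i j) (f i j))
      (hweight i j)]
  have hbalance : ε * S = -(2 * (Δt / ε)) * D :=
    bgk_scheme_energy_identity N Δx Δv v Mw (fun j => (hM j).ne') hmass ε Δt f fnext ρnext hρ
      hscheme
  calc (A - B) / (2 * Δt) + 1 / ε ^ 2 * D
      = (ε * (A - B) + 2 * (Δt / ε) * D) / (2 * ε * Δt) := by field_simp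
    _ ≤ 0 := div_nonpos_of_nonpos_of_nonneg (by linarith [mul_le_mul_of_nonneg_left hdiff hε.le])
      (by positivity)
end

section
/- Discrete moment estimates: for f = (f_{ij}) with moments ρ_i = Σ_j Δv_j f_{ij}, ε J_i = Σ_j Δv_j v_j f_{ij}, S_i = Σ_j Δv_j (v_j² - m₂^{Δv}) f_{ij}, one has ‖ρ‖₂ ≤ ‖f‖_{2,γ}, ε‖J‖₂ ≤ (m₂^{Δv})^{1/2} ‖f - ρM‖_{2,γ}, and ‖S‖₂ ≤ (m₄^{Δv} - (m₂^{Δv})²)^{1/2} ‖f - ρM‖_{2,γ}. -/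
/-!
Each moment is a velocity sum `∑ⱼ Δvⱼ φⱼ gⱼ`. Writing
`Δvⱼ φⱼ gⱼ = (φⱼ √(Δvⱼ Mⱼ)) (gⱼ √(Δvⱼ / Mⱼ))`, Cauchy–Schwarz bounds its square by
`(∑ⱼ Δvⱼ φⱼ² Mⱼ) (∑ⱼ gⱼ² Δvⱼ / Mⱼ)`, and summing over the cells gives an `ℓ²` bound with
constant `√(∑ⱼ Δvⱼ φⱼ² Mⱼ)`. For `φ = 1` this constant is the mass `1`. For `φ = v` and
`φ = v² - m₂` the moment of `M` itself vanishes (by the symmetry of the grid, resp. by the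
definition of `m₂`), so `f` may be replaced by `f - ρM`; the constants are then `m₂` and the
variance `m₄ - m₂²` of `v²`.
-/

open Finset

section WeightedMoments

variable {κ : Type*} (s : Finset κ) {Δv M : κ → ℝ}

theorem sq_sum_mul_le_sum_sq_mul_sum_sq_inv (hΔv : ∀ j ∈ s, 0 ≤ Δv j) (hM : ∀ j ∈ s, 0 < M j)
    (φ g : κ → ℝ) :
    (∑ j ∈ s, Δv j * φ j * g j) ^ 2
      ≤ (∑ j ∈ s, Δv j * φ j ^ 2 * M j) * ∑ j ∈ s, g j ^ 2 * (M j)⁻¹ * Δv j := by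
  refine sum_sq_le_sum_mul_sum_of_sq_le_mul s (fun j hj => ?_) (fun j hj => ?_) (fun j hj => ?_)
  · have := hΔv j hj; have := hM j hj; positivity
  · have := hΔv j hj; have := hM j hj; positivity
  · exact le_of_eq (by field_simp [(hM j hj).ne'])

theorem sum_mul_sub_mul_eq_of_moment_eq_zero {φ : κ → ℝ}
    (hφ : ∑ j ∈ s, Δv j * φ j * M j = 0) (g : κ → ℝ) (c : ℝ) :
    ∑ j ∈ s, Δv j * φ j * (g j - c * M j) = ∑ j ∈ s, Δv j * φ j * g j := by
  have hM : ∑ j ∈ s, Δv j * φ j * (c * M j) = c * ∑ j ∈ s, Δv j * φ j * M j := by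
    rw [mul_sum]; exact sum_congr rfl fun j _ => by ring
  simp only [mul_sub, sum_sub_distrib, hM, hφ, mul_zero, sub_zero]

variable {s} {X : κ → ℝ} {m : ℝ}

theorem sum_centered_mul_eq_zero (hmass : ∑ j ∈ s, M j * Δv j = 1)
    (hm : ∑ j ∈ s, Δv j * X j * M j = m) : ∑ j ∈ s, Δv j * (X j - m) * M j = 0 := by
  have hmass' : ∑ j ∈ s, Δv j * m * M j = m * ∑ j ∈ s, M j * Δv j := by
    rw [mul_sum]; exact sum_congr rfl fun j _ => by ring
  simp only [mul_sub, sub_mul, sum_sub_distrib, hm, hmass', hmass, mul_one, sub_self]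

theorem sum_centered_sq_mul_eq (hmass : ∑ j ∈ s, M j * Δv j = 1)
    (hm : ∑ j ∈ s, Δv j * X j * M j = m) :
    ∑ j ∈ s, Δv j * (X j - m) ^ 2 * M j = ∑ j ∈ s, Δv j * X j ^ 2 * M j - m ^ 2 := by
  have h := sum_centered_mul_eq_zero hmass hm
  have expand : ∀ j ∈ s, Δv j * (X j - m) ^ 2 * M j
      = Δv j * X j ^ 2 * M j - m * (Δv j * X j * M j) - m * (Δv j * (X j - m) * M j) :=
    fun j _ => by ring
  rw [sum_congr rfl expand, sum_sub_distrib, sum_sub_distrib, ← mul_sum, ← mul_sum, h, hm]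
  ring

end WeightedMoments

theorem sqrt_sum_sq_mul_le {I : Type*} [Fintype I] {Δx : I → ℝ} (hΔx : ∀ i, 0 ≤ Δx i)
    {T A : I → ℝ} {C : ℝ} (hC : 0 ≤ C) (h : ∀ i, T i ^ 2 ≤ C * A i) :
    √(∑ i, T i ^ 2 * Δx i) ≤ √C * √(∑ i, A i * Δx i) := by
  rw [← Real.sqrt_mul hC, mul_sum]
  refine Real.sqrt_le_sqrt (sum_le_sum fun i _ => ?_)
  calc T i ^ 2 * Δx i ≤ C * A i * Δx i := mul_le_mul_of_nonneg_right (h i) (hΔx i)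
    _ = C * (A i * Δx i) := mul_assoc ..

theorem sqrt_sum_moment_sq_le {I κ : Type*} [Fintype I] (s : Finset κ) {Δx : I → ℝ}
    (hΔx : ∀ i, 0 ≤ Δx i) {Δv M : κ → ℝ} (hΔv : ∀ j ∈ s, 0 ≤ Δv j)
    (hM : ∀ j ∈ s, 0 < M j) (φ : κ → ℝ) (g : I → κ → ℝ) :
    √(∑ i, (∑ j ∈ s, Δv j * φ j * g i j) ^ 2 * Δx i)
      ≤ √(∑ j ∈ s, Δv j * φ j ^ 2 * M j)
        * √(∑ i, ∑ j ∈ s, g i j ^ 2 * (M j)⁻¹ * Δx i * Δv j) := by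
  have hφ : 0 ≤ ∑ j ∈ s, Δv j * φ j ^ 2 * M j :=
    sum_nonneg fun j hj => by have := hΔv j hj; have := hM j hj; positivity
  have hsum : ∀ i, ∑ j ∈ s, g i j ^ 2 * (M j)⁻¹ * Δx i * Δv j
      = (∑ j ∈ s, g i j ^ 2 * (M j)⁻¹ * Δv j) * Δx i :=
    fun i => by rw [sum_mul]; exact sum_congr rfl fun j _ => by ring
  simp only [hsum]
  exact sqrt_sum_sq_mul_le hΔx hφ fun i => sq_sum_mul_le_sum_sq_mul_sum_sq_inv s hΔv hM φ (g i)

theorem Finset.sum_Icc_comp_add_sub {β : Type*} [AddCommMonoid β] (F : ℤ → β) (a b : ℤ) :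
    ∑ j ∈ Icc a b, F (a + b - j) = ∑ j ∈ Icc a b, F j :=
  sum_nbij' (fun j => a + b - j) (fun j => a + b - j)
    (fun j hj => by simp only [mem_Icc] at hj ⊢; omega)
    (fun j hj => by simp only [mem_Icc] at hj ⊢; omega)
    (fun j _ => by ring) (fun j _ => by ring) (fun _ _ => rfl)

theorem sum_Icc_eq_zero_of_comp_one_sub_eq_neg (L : ℕ) {F : ℤ → ℝ}
    (hF : ∀ j, F (1 - j) = -F j) : ∑ j ∈ Icc (-(L : ℤ) + 1) L, F j = 0 := by
  have h := sum_Icc_comp_add_sub F (-(L : ℤ) + 1) L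
  simp only [show -(L : ℤ) + 1 + L = 1 by ring, hF, sum_neg_distrib, neg_eq_iff_add_eq_zero] at h
  linarith

/-- Discrete moment estimates: with ρ_i = Σ_j Δv_j f_{ij},
ε J_i = Σ_j Δv_j v_j f_{ij}, S_i = Σ_j Δv_j (v_j² - m₂) f_{ij}, one has
‖ρ‖₂ ≤ ‖f‖_{2,γ}, ε‖J‖₂ ≤ √m₂ ‖f - ρM‖_{2,γ},
‖S‖₂ ≤ √(m₄ - m₂²) ‖f - ρM‖_{2,γ}. -/
theorem discrete_moment_estimates {I : Type*} [Fintype I] (L : ℕ)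
    (Δx : I → ℝ) (hΔx : ∀ i, 0 < Δx i)
    (v Δv Mw : ℤ → ℝ)
    (hvsym : ∀ j, v j = - v (1 - j))
    (hΔvsym : ∀ j, Δv j = Δv (1 - j))
    (hΔv : ∀ j ∈ Finset.Icc (-(L : ℤ) + 1) (L : ℤ), 0 < Δv j)
    (hM : ∀ j ∈ Finset.Icc (-(L : ℤ) + 1) (L : ℤ), 0 < Mw j)
    (hMsym : ∀ j, Mw j = Mw (1 - j))
    (hmass : ∑ j ∈ Finset.Icc (-(L : ℤ) + 1) (L : ℤ), Mw j * Δv j = 1)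
    (m₂ m₄ : ℝ)
    (hm₂ : m₂ = ∑ j ∈ Finset.Icc (-(L : ℤ) + 1) (L : ℤ), |v j| ^ 2 * Mw j * Δv j)
    (hm₄ : m₄ = ∑ j ∈ Finset.Icc (-(L : ℤ) + 1) (L : ℤ), |v j| ^ 4 * Mw j * Δv j)
    (ε : ℝ) (hε : 0 < ε)
    (f : I → ℤ → ℝ) (ρ Jm S : I → ℝ)
    (hρ : ∀ i, ρ i = ∑ j ∈ Finset.Icc (-(L : ℤ) + 1) (L : ℤ), Δv j * f i j)
    (hJ : ∀ i, ε * Jm i = ∑ j ∈ Finset.Icc (-(L : ℤ) + 1) (L : ℤ), Δv j * v j * f i j)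
    (hS : ∀ i, S i = ∑ j ∈ Finset.Icc (-(L : ℤ) + 1) (L : ℤ), Δv j * (v j ^ 2 - m₂) * f i j) :
    Real.sqrt (∑ i, (ρ i) ^ 2 * Δx i)
        ≤ Real.sqrt (∑ i, ∑ j ∈ Finset.Icc (-(L : ℤ) + 1) (L : ℤ),
            (f i j) ^ 2 * (Mw j)⁻¹ * Δx i * Δv j) ∧
    ε * Real.sqrt (∑ i, (Jm i) ^ 2 * Δx i)
        ≤ Real.sqrt m₂ * Real.sqrt (∑ i, ∑ j ∈ Finset.Icc (-(L : ℤ) + 1) (L : ℤ),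
            (f i j - ρ i * Mw j) ^ 2 * (Mw j)⁻¹ * Δx i * Δv j) ∧
    Real.sqrt (∑ i, (S i) ^ 2 * Δx i)
        ≤ Real.sqrt (m₄ - m₂ ^ 2) * Real.sqrt (∑ i, ∑ j ∈ Finset.Icc (-(L : ℤ) + 1) (L : ℤ),
            (f i j - ρ i * Mw j) ^ 2 * (Mw j)⁻¹ * Δx i * Δv j) := by
  set s := Icc (-(L : ℤ) + 1) (L : ℤ)
  have hΔx' : ∀ i, 0 ≤ Δx i := fun i => (hΔx i).le
  have hΔv' : ∀ j ∈ s, 0 ≤ Δv j := fun j hj => (hΔv j hj).le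
  have hmass' : ∑ j ∈ s, Δv j * Mw j = 1 := (sum_congr rfl fun j _ => mul_comm _ _).trans hmass
  have h₂ : ∑ j ∈ s, Δv j * v j ^ 2 * Mw j = m₂ :=
    hm₂ ▸ sum_congr rfl fun j _ => by rw [sq_abs]; ring
  have h₄ : ∑ j ∈ s, Δv j * (v j ^ 2) ^ 2 * Mw j = m₄ :=
    hm₄ ▸ sum_congr rfl fun j _ => by rw [Even.pow_abs ⟨2, rfl⟩]; ring
  have hodd : ∑ j ∈ s, Δv j * v j * Mw j = 0 :=
    sum_Icc_eq_zero_of_comp_one_sub_eq_neg L fun j => by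
      rw [← hΔvsym, ← hMsym, hvsym j]; ring
  have hvar : ∑ j ∈ s, Δv j * (v j ^ 2 - m₂) ^ 2 * Mw j = m₄ - m₂ ^ 2 := by
    rw [sum_centered_sq_mul_eq hmass h₂, h₄]
  have hJ' : ∀ i, ε * Jm i = ∑ j ∈ s, Δv j * v j * (f i j - ρ i * Mw j) := fun i => by
    rw [hJ, sum_mul_sub_mul_eq_of_moment_eq_zero s hodd]
  have hS' : ∀ i, S i = ∑ j ∈ s, Δv j * (v j ^ 2 - m₂) * (f i j - ρ i * Mw j) := fun i => by
    rw [hS, sum_mul_sub_mul_eq_of_moment_eq_zero s (sum_centered_mul_eq_zero hmass h₂)]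
  have hεJ : ε * √(∑ i, Jm i ^ 2 * Δx i) = √(∑ i, (ε * Jm i) ^ 2 * Δx i) := by
    simp only [mul_pow, mul_assoc, ← mul_sum]
    rw [Real.sqrt_mul (sq_nonneg ε), Real.sqrt_sq hε.le]
  refine ⟨?_, ?_, ?_⟩
  · simpa only [hρ, one_pow, mul_one, hmass', Real.sqrt_one, one_mul]
      using sqrt_sum_moment_sq_le s hΔx' hΔv' hM (fun _ => 1) f
  · simpa only [hεJ, hJ', h₂]
      using sqrt_sum_moment_sq_le s hΔx' hΔv' hM v fun i j => f i j - ρ i * Mw j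
  · simpa only [hS', ← hvar] using
      sqrt_sum_moment_sq_le s hΔx' hΔv' hM (fun j => v j ^ 2 - m₂) fun i j => f i j - ρ i * Mw j
end

section
/- Estimate of the discrete Poisson solution: if (φ_i)_{i∈ℤ/Nℤ} with N odd satisfies −((D_xφ)_{i+1} − (D_xφ)_{i-1})/2 = Δx_i ρ_i for all i and Σ_i Δx_i φ_i = 0, then ‖D_xφ‖₂ ≤ C_P ‖ρ‖₂, where C_P is the discrete Poincaré constant. -/
/-!
Testing the equation against `φ` and summing by parts turns `∑ Δxᵢ ρᵢ φᵢ` into `‖D_xφ‖₂²`.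
Cauchy–Schwarz and the Poincaré inequality then give
`‖D_xφ‖₂² ≤ ‖ρ‖₂ ‖φ‖₂ ≤ C_P ‖ρ‖₂ ‖D_xφ‖₂`, and one divides by `‖D_xφ‖₂`; when it vanishes the
equation forces `ρ = 0`.
-/

open Finset

theorem Real.sum_weight_mul_mul_le_sqrt_mul_sqrt {ι : Type*} (s : Finset ι) {w : ι → ℝ}
    (hw : ∀ i ∈ s, 0 ≤ w i) (f g : ι → ℝ) :
    ∑ i ∈ s, w i * f i * g i ≤ √(∑ i ∈ s, w i * f i ^ 2) * √(∑ i ∈ s, w i * g i ^ 2) := by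
  have hsq : ∀ i ∈ s, ∀ h : ι → ℝ, (√(w i) * h i) ^ 2 = w i * h i ^ 2 := fun i hi h => by
    rw [mul_pow, Real.sq_sqrt (hw i hi)]
  have hprod : ∀ i ∈ s, (√(w i) * f i) * (√(w i) * g i) = w i * f i * g i := fun i hi => by
    linear_combination (f i * g i) * Real.mul_self_sqrt (hw i hi)
  simpa only [sum_congr rfl hprod, sum_congr rfl fun i hi => hsq i hi f,
    sum_congr rfl fun i hi => hsq i hi g] using
    Real.sum_mul_le_sqrt_mul_sqrt s (fun i => √(w i) * f i) (fun i => √(w i) * g i)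

theorem Fintype.eq_zero_of_sum_weight_mul_sq_eq_zero {ι : Type*} [Fintype ι] {w f : ι → ℝ}
    (hw : ∀ i, 0 < w i) (h : ∑ i, w i * f i ^ 2 = 0) (i : ι) : f i = 0 := by
  have hterms := (sum_eq_zero_iff_of_nonneg fun j => mul_nonneg (hw j).le (sq_nonneg (f j))).mp h
  simpa [(hw i).ne'] using congrFun hterms i

theorem Fintype.sum_sub_translate_mul_eq_sum_mul_sub_translate {G R : Type*} [AddCommGroup G]
    [Fintype G] [CommRing R] (f g : G → R) (a : G) :
    ∑ i, (f (i - a) - f (i + a)) * g i = ∑ i, f i * (g (i + a) - g (i - a)) := by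
  have hleft : ∑ i, f (i - a) * g i = ∑ i, f i * g (i + a) :=
    (Equiv.sum_comp (Equiv.addRight a) fun i => f (i - a) * g i).symm.trans (by simp)
  have hright : ∑ i, f (i + a) * g i = ∑ i, f i * g (i - a) :=
    (Equiv.sum_comp (Equiv.subRight a) fun i => f (i + a) * g i).symm.trans (by simp)
  simp only [sub_mul, mul_sub, sum_sub_distrib, hleft, hright]

theorem discrete_poisson_energy_identity {N : ℕ} [NeZero N] {Δx φ ρ Dφ : ZMod N → ℝ}
    (hΔx : ∀ i, Δx i ≠ 0) (hDφ : ∀ i, Dφ i = (φ (i + 1) - φ (i - 1)) / (2 * Δx i))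
    (hpoisson : ∀ i, -((Dφ (i + 1) - Dφ (i - 1)) / 2) = Δx i * ρ i) :
    ∑ i, Δx i * ρ i * φ i = ∑ i, Δx i * Dφ i ^ 2 := by
  have hdiff : ∀ i, φ (i + 1) - φ (i - 1) = 2 * Δx i * Dφ i := fun i => by
    rw [hDφ i, mul_div_cancel₀ _ (mul_ne_zero two_ne_zero (hΔx i))]
  calc ∑ i, Δx i * ρ i * φ i = (∑ i, (Dφ (i - 1) - Dφ (i + 1)) * φ i) / 2 := by
        rw [sum_div]
        exact sum_congr rfl fun i _ => by linear_combination (-φ i) * hpoisson i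
    _ = (∑ i, Dφ i * (φ (i + 1) - φ (i - 1))) / 2 := by
        rw [Fintype.sum_sub_translate_mul_eq_sum_mul_sub_translate]
    _ = ∑ i, Δx i * Dφ i ^ 2 := by
        simp only [hdiff, sum_div]
        exact sum_congr rfl fun i _ => by ring

theorem discrete_poisson_estimate_general (N : ℕ) [NeZero N]
    (Δx : ZMod N → ℝ) (hΔx : ∀ i, 0 < Δx i)
    (CP : ℝ)
    (hPoincare : ∀ ψ : ZMod N → ℝ, (∑ i, Δx i * ψ i = 0) →
        Real.sqrt (∑ i, Δx i * (ψ i) ^ 2)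
          ≤ CP * Real.sqrt (∑ i, Δx i * ((ψ (i + 1) - ψ (i - 1)) / (2 * Δx i)) ^ 2))
    (φ ρ : ZMod N → ℝ)
    (Dφ : ZMod N → ℝ) (hDφ : ∀ i, Dφ i = (φ (i + 1) - φ (i - 1)) / (2 * Δx i))
    (hpoisson : ∀ i, -((Dφ (i + 1) - Dφ (i - 1)) / 2) = Δx i * ρ i)
    (hmean : ∑ i, Δx i * φ i = 0) :
    Real.sqrt (∑ i, Δx i * (Dφ i) ^ 2) ≤ CP * Real.sqrt (∑ i, Δx i * (ρ i) ^ 2) := by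
  set S := ∑ i, Δx i * Dφ i ^ 2
  have hCS : S ≤ √(∑ i, Δx i * ρ i ^ 2) * √(∑ i, Δx i * φ i ^ 2) :=
    (discrete_poisson_energy_identity (fun i => (hΔx i).ne') hDφ hpoisson).symm.trans_le <|
      Real.sum_weight_mul_mul_le_sqrt_mul_sqrt univ (fun i _ => (hΔx i).le) ρ φ
  have hP : √(∑ i, Δx i * φ i ^ 2) ≤ CP * √S := by
    simpa only [← hDφ] using hPoincare φ hmean
  rcases (Real.sqrt_nonneg S).eq_or_lt with hS | hS
  · have hDφ0 : ∀ i, Dφ i = 0 := Fintype.eq_zero_of_sum_weight_mul_sq_eq_zero hΔx <|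
      (Real.sqrt_eq_zero (sum_nonneg fun i _ => by have := hΔx i; positivity)).mp hS.symm
    have hρ0 : ∀ i, ρ i = 0 := fun i => by
      simpa [hDφ0, (hΔx i).ne'] using (hpoisson i).symm
    simp [← hS, hρ0]
  · refine le_of_mul_le_mul_right ?_ hS
    calc √S * √S = S := Real.mul_self_sqrt (Real.sqrt_pos.mp hS).le
      _ ≤ √(∑ i, Δx i * ρ i ^ 2) * (CP * √S) :=
          hCS.trans (mul_le_mul_of_nonneg_left hP (Real.sqrt_nonneg _))
      _ = CP * √(∑ i, Δx i * ρ i ^ 2) * √S := by ring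

/-- Estimate of the discrete Poisson solution on the torus (N odd):
if −((D_xφ)_{i+1} − (D_xφ)_{i-1})/2 = Δx_i ρ_i and φ has zero mean,
then ‖D_xφ‖₂ ≤ C_P ‖ρ‖₂ where C_P is the discrete Poincaré constant. -/
theorem discrete_poisson_estimate (N : ℕ) [NeZero N] (hodd : Odd N)
    (Δx : ZMod N → ℝ) (hΔx : ∀ i, 0 < Δx i)
    (CP : ℝ)
    (hPoincare : ∀ ψ : ZMod N → ℝ, (∑ i, Δx i * ψ i = 0) →
        Real.sqrt (∑ i, Δx i * (ψ i) ^ 2)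
          ≤ CP * Real.sqrt (∑ i, Δx i * ((ψ (i + 1) - ψ (i - 1)) / (2 * Δx i)) ^ 2))
    (φ ρ : ZMod N → ℝ)
    (Dφ : ZMod N → ℝ) (hDφ : ∀ i, Dφ i = (φ (i + 1) - φ (i - 1)) / (2 * Δx i))
    (hpoisson : ∀ i, -((Dφ (i + 1) - Dφ (i - 1)) / 2) = Δx i * ρ i)
    (hmean : ∑ i, Δx i * φ i = 0) :
    Real.sqrt (∑ i, Δx i * (Dφ i) ^ 2) ≤ CP * Real.sqrt (∑ i, Δx i * (ρ i) ^ 2) :=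
  discrete_poisson_estimate_general N Δx hΔx CP hPoincare φ ρ Dφ hDφ hpoisson hmean
end

section
/- Every nonzero eigenvalue λ of the Fourier-mode BGK operator g ↦ (∫_ℝ g dv) M − (1 + ikv) g on L²(dγ) satisfies Re(λ) = −1 + (∫ g_λ dv)² / ‖g_λ‖²_{L²(dγ)} ∈ [−1, 0) for the (normalized real-mass) eigenfunction g_λ; in particular for k = 0 the only nonzero eigenvalue is λ = −1. -/
/-!
Write the eigenvalue equation as `(λ + 1 + ikv) g = ρ M` with `ρ = ∫ g` real. Multiplying by
`conj g / M` and taking real parts removes the transport term `ikv |g|²/M`, which is purely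
imaginary, and integrating gives `(Re λ + 1) ‖g‖² = ρ²`: this is the formula for `Re λ` and
shows `Re λ ≥ -1`.

If `Re λ ≥ 0`, then `a = Re λ + 1 ≥ 1` and `|λ + 1 + ikv| ≥ a`, so `g = ρ M / (λ + 1 + ikv)` and
the balance becomes `∫ a M / |λ + 1 + ikv|² = 1 = ∫ M`. Since the integrand on the left is at
most `M` and both sides are continuous, they agree everywhere, and at `v = 0` this forces `λ = 0`.

For `k = 0`, integrating the equation gives `λ ρ = 0`, so `ρ = 0` and then `(λ + 1) g = 0`.
-/

open MeasureTheory ProbabilityTheory Complex ComplexConjugate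

theorem re_add_one_mul_integral_norm_sq_div_eq {M : ℝ → ℝ} (hM : ∀ v, M v ≠ 0) {g : ℝ → ℂ}
    (hg : Integrable g) {k ρ : ℝ} {lam : ℂ}
    (heig : ∀ v, (lam + 1 + I * k * v) * g v = ρ * M v) (hρ : ∫ v, g v = ρ) :
    (lam.re + 1) * ∫ v, ‖g v‖ ^ 2 / M v = ρ ^ 2 := by
  have hpt : ∀ v, (lam.re + 1) * (‖g v‖ ^ 2 / M v) = ρ * (g v).re := fun v => by
    have h := congrArg (fun z => (z * conj (g v)).re) (heig v)
    simp only [mul_assoc, mul_conj, ← ofReal_mul, re_mul_ofReal, re_ofReal_mul, conj_re] at h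
    simp only [add_re, one_re, mul_re, I_re, ofReal_re, I_im, ofReal_im, normSq_eq_norm_sq] at h
    field_simp [hM v]
    linear_combination h
  calc (lam.re + 1) * ∫ v, ‖g v‖ ^ 2 / M v = ∫ v, ρ * (g v).re := by
        rw [← integral_const_mul]; simp_rw [hpt]
    _ = ρ * (∫ v, g v).re := by rw [integral_const_mul]; exact congrArg _ (integral_re hg)
    _ = ρ ^ 2 := by rw [hρ, ofReal_re, sq]

theorem norm_sq_div_eq_of_mul_eq {d z : ℂ} {ρ x : ℝ} (hd : d ≠ 0) (hx : x ≠ 0)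
    (h : d * z = ρ * x) : ‖z‖ ^ 2 / x = ρ ^ 2 * (x / ‖d‖ ^ 2) := by
  have hn := congrArg (‖·‖ ^ 2) h
  simp only [norm_mul, norm_real, Real.norm_eq_abs, mul_pow, sq_abs] at hn
  have : ‖d‖ ≠ 0 := norm_ne_zero_iff.2 hd
  field_simp
  linear_combination hn

theorem eq_zero_of_norm_add_one_sq_eq {lam : ℂ} (hre : 0 ≤ lam.re)
    (h : ‖lam + 1‖ ^ 2 = lam.re + 1) : lam = 0 := by
  rw [← normSq_eq_norm_sq, normSq_apply] at h
  simp only [add_re, one_re, add_im, one_im, add_zero] at h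
  have him : lam.im = 0 := by nlinarith
  exact Complex.ext (by rw [zero_re]; nlinarith) him

theorem re_lt_zero_of_forall_mul_eq {M : ℝ → ℝ} (hMpos : ∀ v, 0 < M v) (hMcont : Continuous M)
    (hMint : Integrable M) (hMone : ∫ v, M v = 1) {g : ℝ → ℂ} {k ρ : ℝ} {lam : ℂ}
    (hlam : lam ≠ 0) (heig : ∀ v, (lam + 1 + I * k * v) * g v = ρ * M v)
    (hN : 0 < ∫ v, ‖g v‖ ^ 2 / M v)
    (hbal : (lam.re + 1) * ∫ v, ‖g v‖ ^ 2 / M v = ρ ^ 2) : lam.re < 0 := by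
  by_contra! hre
  set a := lam.re + 1
  have ha1 : 1 ≤ a := by linarith
  set D : ℝ → ℂ := fun v => lam + 1 + I * k * v
  have hD : ∀ v, a ≤ ‖D v‖ := fun v => by
    simpa [D, a] using re_le_norm (D v)
  have hDsq : ∀ v, a ≤ ‖D v‖ ^ 2 := fun v => by nlinarith [hD v]
  set φ : ℝ → ℝ := fun v => M v / ‖D v‖ ^ 2
  have hφ_nonneg : ∀ v, 0 ≤ φ v := fun v => div_nonneg (hMpos v).le (sq_nonneg _)
  have hφ_le : ∀ v, a * φ v ≤ M v := fun v => by
    have hDv : 0 < ‖D v‖ ^ 2 := by linarith [hDsq v]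
    simp only [φ]
    rw [← mul_div_assoc, div_le_iff₀ hDv]
    nlinarith [hDsq v, hMpos v]
  have hφ_cont : Continuous φ :=
    hMcont.div (by fun_prop) fun v => by linarith [hDsq v]
  have hφ_int : Integrable φ :=
    hMint.mono' hφ_cont.aestronglyMeasurable (ae_of_all _ fun v => by
      rw [Real.norm_of_nonneg (hφ_nonneg v)]; nlinarith [hφ_le v, hφ_nonneg v])
  have hNφ : ∫ v, ‖g v‖ ^ 2 / M v = ρ ^ 2 * ∫ v, φ v := by
    rw [← integral_const_mul]
    exact integral_congr_ae (ae_of_all _ fun v =>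
      norm_sq_div_eq_of_mul_eq (fun h => by linarith [hD v, norm_eq_zero.2 h]) (hMpos v).ne'
        (heig v))
  have hint : ∫ v, a * φ v = ∫ v, M v := by
    rw [integral_const_mul, hMone]
    refine mul_left_cancel₀ hN.ne' ?_
    linear_combination (∫ v, φ v) * hbal - hNφ
  have hφ_eq : (fun v => a * φ v) = M :=
    ((hφ_cont.const_mul a).ae_eq_iff_eq volume hMcont).1
      ((integral_eq_iff_of_ae_le (hφ_int.const_mul a) hMint (ae_of_all _ hφ_le)).1 hint)
  refine hlam (eq_zero_of_norm_add_one_sq_eq hre ?_)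
  have hD0 : 0 < ‖D 0‖ ^ 2 := by linarith [hDsq 0]
  have h := congrFun hφ_eq 0
  simp only [φ] at h
  rw [← mul_div_assoc, div_eq_iff hD0.ne'] at h
  have hD0a : ‖D 0‖ ^ 2 = a := mul_left_cancel₀ (hMpos 0).ne' (by linear_combination -h)
  simpa [D] using hD0a

theorem eq_neg_one_of_forall_mul_eq {M : ℝ → ℝ} (hMone : ∫ v, M v = 1) {g : ℝ → ℂ} (hg : g ≠ 0)
    {lam ρ : ℂ} (hlam : lam ≠ 0) (heig : ∀ v, (lam + 1) * g v = ρ * M v) (hρ : ∫ v, g v = ρ) :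
    lam = -1 := by
  have hρ0 : ρ = 0 := by
    have hmass : (lam + 1) * ρ = ρ :=
      calc (lam + 1) * ρ = ∫ v, (lam + 1) * g v := by rw [integral_const_mul, hρ]
        _ = ∫ v, ρ * M v := by simp_rw [heig]
        _ = ρ := by rw [integral_const_mul, integral_complex_ofReal, hMone, ofReal_one, mul_one]
    exact (mul_eq_zero.1 (by linear_combination hmass : lam * ρ = 0)).resolve_left hlam
  by_contra hne
  refine hg (funext fun v => ?_)
  have := heig v
  rw [hρ0, zero_mul] at this
  exact (mul_eq_zero.1 this).resolve_left fun h => hne (by linear_combination h)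

theorem bgk_fourier_eigenvalue_general
    (M : ℝ → ℝ) (hM : ∀ v, M v = (Real.sqrt (2 * Real.pi))⁻¹ * Real.exp (-(v ^ 2) / 2))
    (k : ℝ) (lam : ℂ) (hlam : lam ≠ 0)
    (g : ℝ → ℂ)
    (hgInt : Integrable g)
    (hg_ne : 0 < ∫ v, ‖g v‖ ^ 2 / M v)
    (hmass_real : (∫ v, g v).im = 0)
    (heig : ∀ v, (∫ w, g w) * (M v : ℂ) - (1 + Complex.I * k * v) * g v = lam * g v) :
    lam.re = -1 + ((∫ v, g v).re) ^ 2 / (∫ v, ‖g v‖ ^ 2 / M v) ∧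
    lam.re ∈ Set.Ico (-1 : ℝ) 0 ∧
    (k = 0 → lam = -1) := by
  obtain rfl : M = gaussianPDFReal 0 1 := by simp [funext_iff, hM, gaussianPDFReal]
  set ρ := (∫ v, g v).re
  have hρ : ∫ v, g v = ρ := Complex.ext rfl hmass_real
  have heig' : ∀ v, (lam + 1 + I * k * v) * g v = ρ * gaussianPDFReal 0 1 v := fun v => by
    rw [← hρ]; linear_combination -heig v
  have hMpos : ∀ v, 0 < gaussianPDFReal 0 1 v := fun v => gaussianPDFReal_pos 0 1 v one_ne_zero
  have hbal := re_add_one_mul_integral_norm_sq_div_eq (fun v => (hMpos v).ne') hgInt heig' hρ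
  have hre : lam.re = -1 + ρ ^ 2 / ∫ v, ‖g v‖ ^ 2 / gaussianPDFReal 0 1 v := by
    rw [← hbal]; field_simp; ring
  refine ⟨hre, ⟨?_, ?_⟩, fun hk => ?_⟩
  · rw [hre]; linarith [div_nonneg (sq_nonneg ρ) hg_ne.le]
  · exact re_lt_zero_of_forall_mul_eq hMpos (by unfold gaussianPDFReal; fun_prop)
      (integrable_gaussianPDFReal 0 1) (integral_gaussianPDFReal_eq_one 0 one_ne_zero) hlam heig'
      hg_ne hbal
  · subst hk
    refine eq_neg_one_of_forall_mul_eq (integral_gaussianPDFReal_eq_one 0 one_ne_zero) ?_ hlam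
      (fun v => by simpa using heig' v) hρ
    rintro rfl
    simp at hg_ne

/-- Every nonzero eigenvalue lam of the Fourier-mode BGK operator
g ↦ (∫ g dv) M − (1 + ikv) g on L²(dγ) satisfies
Re(lam) = −1 + (∫ g dv)²/‖g‖²_{L²(dγ)} ∈ [−1, 0) for the (real-mass)
eigenfunction g; in particular for k = 0 the only nonzero eigenvalue is −1. -/
theorem bgk_fourier_eigenvalue
    (M : ℝ → ℝ) (hM : ∀ v, M v = (Real.sqrt (2 * Real.pi))⁻¹ * Real.exp (-(v ^ 2) / 2))
    (k : ℝ) (lam : ℂ) (hlam : lam ≠ 0)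
    (g : ℝ → ℂ)
    (hgInt : Integrable g)
    (hgL2 : Integrable (fun v => ‖g v‖ ^ 2 / M v))
    (hg_ne : 0 < ∫ v, ‖g v‖ ^ 2 / M v)
    (hvg : Integrable (fun v => v * ‖g v‖ ^ 2 / M v))
    (hmass_real : (∫ v, g v).im = 0)
    (heig : ∀ v, (∫ w, g w) * (M v : ℂ) - (1 + Complex.I * k * v) * g v = lam * g v) :
    lam.re = -1 + ((∫ v, g v).re) ^ 2 / (∫ v, ‖g v‖ ^ 2 / M v) ∧
    lam.re ∈ Set.Ico (-1 : ℝ) 0 ∧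
    (k = 0 → lam = -1) :=
  bgk_fourier_eigenvalue_general M hM k lam hlam g hgInt hg_ne hmass_real heig
end
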